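/- Let p:[n]→ℝ² be injective with ‖p(i)‖=1 for all i and Σᵢ p(i)=0. Then L(K_n,p) = (n/2)I + (1/2)(ppᵀ - xxᵀ - yyᵀ - rrᵀ), where p∈ℝ^{2n} is the concatenation of the p(i), x=(1,0,1,0,…,1,0)ᵀ, y=(0,1,0,1,…,0,1)ᵀ, and r is the concatenation of p^⊥(i)=(-p_y(i),p_x(i)). -/

import Mathlib

/-! For unit vectors `u ≠ v` in the plane, `‖u - v‖² = 2 (1 - ⟨u, v⟩)` and
`(u - v)(u - v)ᵀ = (1 - ⟨u, v⟩)(I + u^⊥ v^⊥ᵀ - u vᵀ)`, so every block `d_{ij} d_{ij}ᵀ` equals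
`½ (I + p^⊥(i) p^⊥(j)ᵀ - p(i) p(j)ᵀ)`, which is bilinear in the two points. Off the diagonal this
is the claim. On the diagonal, summing over `j` and using `∑ p(j) = 0` kills the bilinear terms,
leaving `(n/2) I` minus the missing term `j = i`. -/

open Matrix

noncomputable section

def euclidNorm {d : ℕ} (v : Fin d → ℝ) : ℝ := Real.sqrt (∑ i, v i ^ 2)

def dvec {n d : ℕ} (p : Fin n → Fin d → ℝ) (i j : Fin n) : Fin d → ℝ :=
  if p i = p j then 0 else (euclidNorm (p i - p j))⁻¹ • (p i - p j)

abbrev EdgeIdx {n : ℕ} (G : SimpleGraph (Fin n)) [DecidableRel G.Adj] : Type :=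
  {e : Fin n × Fin n // e.1 < e.2 ∧ G.Adj e.1 e.2}

def rigidity {n d : ℕ} (G : SimpleGraph (Fin n)) [DecidableRel G.Adj]
    (p : Fin n → Fin d → ℝ) : Matrix (Fin n × Fin d) (EdgeIdx G) ℝ :=
  fun v e => ((if v.1 = e.1.1 then (1:ℝ) else 0) - (if v.1 = e.1.2 then 1 else 0))
      * dvec p e.1.1 e.1.2 v.2

def stiffness {n d : ℕ} (G : SimpleGraph (Fin n)) [DecidableRel G.Adj]
    (p : Fin n → Fin d → ℝ) : Matrix (Fin n × Fin d) (Fin n × Fin d) ℝ :=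
  rigidity G p * (rigidity G p)ᴴ

def lowerStiffness {n d : ℕ} (G : SimpleGraph (Fin n)) [DecidableRel G.Adj]
    (p : Fin n → Fin d → ℝ) : Matrix (EdgeIdx G) (EdgeIdx G) ℝ :=
  (rigidity G p)ᴴ * rigidity G p

theorem stiffness_isHermitian {n d : ℕ} (G : SimpleGraph (Fin n)) [DecidableRel G.Adj]
    (p : Fin n → Fin d → ℝ) : (stiffness G p).IsHermitian :=
  Matrix.isHermitian_mul_conjTranspose_self _

def eigs {m : Type*} [Fintype m] [DecidableEq m] (A : Matrix m m ℝ)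
    (hA : A.IsHermitian) : Multiset ℝ :=
  Finset.univ.val.map hA.eigenvalues

def ascEigs {m : Type*} [Fintype m] [DecidableEq m] (A : Matrix m m ℝ)
    (hA : A.IsHermitian) : List ℝ :=
  (eigs A hA).sort (· ≤ ·)

def nthSmallest {m : Type*} [Fintype m] [DecidableEq m] (A : Matrix m m ℝ)
    (hA : A.IsHermitian) (k : ℕ) : ℝ :=
  (ascEigs A hA).getD (k-1) 0

section

variable {ι M : Type*} [Fintype ι] [LinearOrder ι] [AddCommMonoid M]

theorem two_nsmul_sum_filter_lt {g : ι → ι → M} (hsymm : ∀ k l, g k l = g l k)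
    (hdiag : ∀ k, g k k = 0) :
    2 • ∑ e ∈ Finset.univ.filter (fun e : ι × ι => e.1 < e.2), g e.1 e.2
      = ∑ k, ∑ l, g k l := by
  have hgt : ∑ e ∈ Finset.univ.filter (fun e : ι × ι => e.2 < e.1), g e.1 e.2
      = ∑ e ∈ Finset.univ.filter (fun e : ι × ι => e.1 < e.2), g e.1 e.2 :=
    Finset.sum_nbij' Prod.swap Prod.swap (by simp) (by simp) (by simp) (by simp)
      (fun e _ => hsymm _ _)
  have hge : ∑ e ∈ Finset.univ.filter (fun e : ι × ι => ¬ e.1 < e.2), g e.1 e.2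
      = ∑ e ∈ Finset.univ.filter (fun e : ι × ι => e.2 < e.1), g e.1 e.2 := by
    refine (Finset.sum_subset (fun e => by simpa using le_of_lt) fun e he hlt => ?_).symm
    simp only [Finset.mem_filter, Finset.mem_univ, true_and, not_lt] at he hlt
    rw [le_antisymm hlt he, hdiag]
  rw [← Finset.sum_product', Finset.univ_product_univ,
    ← Finset.sum_filter_add_sum_filter_not Finset.univ (fun e : ι × ι => e.1 < e.2)
      (fun e => g e.1 e.2), hge, hgt, two_nsmul]

end

theorem sum_sum_incidence_mul {ι R : Type*} [Fintype ι] [DecidableEq ι] [CommRing R]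
    {f : ι → ι → R} (hsymm : ∀ k l, f k l = f l k) (i j : ι) :
    ∑ k, ∑ l, ((if i = k then (1 : R) else 0) - if i = l then 1 else 0)
        * ((if j = k then (1 : R) else 0) - if j = l then 1 else 0) * f k l
      = 2 * ((if i = j then ∑ k, f i k else 0) - f i j) := by
  simp only [sub_mul, mul_sub, ite_mul, one_mul, zero_mul, mul_ite, mul_one, mul_zero,
    Finset.sum_sub_distrib, Finset.sum_ite_eq, Finset.sum_ite_irrel, Finset.mem_univ, if_true,
    Finset.sum_const_zero]
  split_ifs with hij
  · subst hij
    simp only [hsymm _ i]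
    ring
  · rw [hsymm j i]
    ring

theorem dvec_self {n d : ℕ} (p : Fin n → Fin d → ℝ) (i : Fin n) : dvec p i i = 0 := by
  simp [dvec]

theorem euclidNorm_neg {d : ℕ} (v : Fin d → ℝ) : euclidNorm (-v) = euclidNorm v := by
  simp [euclidNorm]

theorem dvec_swap {n d : ℕ} (p : Fin n → Fin d → ℝ) (i j : Fin n) :
    dvec p j i = -dvec p i j := by
  unfold dvec
  by_cases h : p i = p j
  · simp [h]
  · rw [if_neg (Ne.symm h), if_neg h, ← neg_sub, euclidNorm_neg, smul_neg]

theorem stiffness_top_apply {n d : ℕ} (p : Fin n → Fin d → ℝ) (i j : Fin n) (a b : Fin d) :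
    stiffness ⊤ p (i, a) (j, b)
      = (if i = j then ∑ k, dvec p i k a * dvec p i k b else 0)
        - dvec p i j a * dvec p i j b := by
  set f : Fin n → Fin n → ℝ := fun k l => dvec p k l a * dvec p k l b
  have hsymm : ∀ k l, f k l = f l k := fun k l => by
    simp only [f, dvec_swap p k l, Pi.neg_apply, neg_mul_neg]
  set g : Fin n → Fin n → ℝ := fun k l =>
    ((if i = k then (1 : ℝ) else 0) - if i = l then 1 else 0)
      * ((if j = k then (1 : ℝ) else 0) - if j = l then 1 else 0) * f k l
  have hedges : stiffness ⊤ p (i, a) (j, b)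
      = ∑ e ∈ Finset.univ.filter (fun e : Fin n × Fin n => e.1 < e.2), g e.1 e.2 := by
    rw [stiffness, Matrix.mul_apply,
      Finset.sum_subtype _
        (p := fun e : Fin n × Fin n => e.1 < e.2 ∧ (⊤ : SimpleGraph _).Adj e.1 e.2)
        (fun e => by simpa using ne_of_lt)]
    refine Finset.sum_congr rfl fun e _ => ?_
    simp only [rigidity, Matrix.conjTranspose_apply, star_trivial, g, f]
    ring
  -- `EdgeIdx ⊤` lists each edge once, as `k < l`; symmetrizing gives a sum over all pairs.
  have h2 := two_nsmul_sum_filter_lt (g := g) (fun k l => by simp only [g, hsymm k l]; ring)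
    (fun k => by simp [g, f, dvec_self])
  rw [sum_sum_incidence_mul hsymm, two_nsmul] at h2
  rw [hedges]
  linarith

def perp (u : Fin 2 → ℝ) : Fin 2 → ℝ := fun a => if a = 0 then -(u 1) else u 0

theorem euclidNorm_sq_fin_two (u : Fin 2 → ℝ) : euclidNorm u ^ 2 = u 0 ^ 2 + u 1 ^ 2 := by
  rw [euclidNorm, Real.sq_sqrt (by positivity), Fin.sum_univ_two]

theorem sq_add_sq_of_euclidNorm_eq_one {u : Fin 2 → ℝ} (hu : euclidNorm u = 1) :
    u 0 ^ 2 + u 1 ^ 2 = 1 := by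
  rw [← euclidNorm_sq_fin_two, hu, one_pow]

section UnitCircle

variable {u v : Fin 2 → ℝ}

theorem euclidNorm_sub_sq_of_unit (hu : u 0 ^ 2 + u 1 ^ 2 = 1) (hv : v 0 ^ 2 + v 1 ^ 2 = 1) :
    euclidNorm (u - v) ^ 2 = 2 * (1 - (u 0 * v 0 + u 1 * v 1)) := by
  rw [euclidNorm_sq_fin_two, Pi.sub_apply, Pi.sub_apply]
  linear_combination hu + hv

theorem sub_mul_sub_of_unit (hu : u 0 ^ 2 + u 1 ^ 2 = 1) (hv : v 0 ^ 2 + v 1 ^ 2 = 1)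
    (a b : Fin 2) :
    (u a - v a) * (u b - v b) = (1 - (u 0 * v 0 + u 1 * v 1))
      * ((if a = b then 1 else 0) + perp u a * perp v b - u a * v b) := by
  fin_cases a <;> fin_cases b <;>
    simp only [perp, Fin.zero_eta, Fin.mk_one, Fin.isValue, ↓reduceIte, one_ne_zero, zero_ne_one]
  · linear_combination (v 1 ^ 2) * hu + (1 - u 0 ^ 2) * hv
  · linear_combination (-(v 0 * v 1)) * hu + (-(u 0 * u 1)) * hv
  · linear_combination (-(v 0 * v 1)) * hu + (-(u 0 * u 1)) * hv
  · linear_combination (v 0 ^ 2) * hu + (1 - u 1 ^ 2) * hv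

theorem dot_ne_one_of_unit (hu : u 0 ^ 2 + u 1 ^ 2 = 1) (hv : v 0 ^ 2 + v 1 ^ 2 = 1)
    (hne : u ≠ v) : u 0 * v 0 + u 1 * v 1 ≠ 1 := by
  intro hdot
  have h : (u 0 - v 0) ^ 2 + (u 1 - v 1) ^ 2 = 0 := by linear_combination hu + hv - 2 * hdot
  refine hne (funext fun a => ?_)
  fin_cases a <;> simp only [Fin.zero_eta, Fin.mk_one] <;>
    nlinarith [sq_nonneg (u 0 - v 0), sq_nonneg (u 1 - v 1)]

end UnitCircle

theorem dvec_mul_dvec_of_unit {n : ℕ} {p : Fin n → Fin 2 → ℝ} {i j : Fin n}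
    (hne : p i ≠ p j) (hi : euclidNorm (p i) = 1) (hj : euclidNorm (p j) = 1) (a b : Fin 2) :
    dvec p i j a * dvec p i j b
      = ((if a = b then 1 else 0) + perp (p i) a * perp (p j) b - p i a * p j b) / 2 := by
  have hi' := sq_add_sq_of_euclidNorm_eq_one hi
  have hj' := sq_add_sq_of_euclidNorm_eq_one hj
  have hdot : 1 - (p i 0 * p j 0 + p i 1 * p j 1) ≠ 0 :=
    sub_ne_zero.mpr (dot_ne_one_of_unit hi' hj' hne).symm
  calc dvec p i j a * dvec p i j b
      = (p i a - p j a) * (p i b - p j b) / euclidNorm (p i - p j) ^ 2 := by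
        simp only [dvec, if_neg hne, Pi.smul_apply, Pi.sub_apply, smul_eq_mul]
        ring
    _ = _ := by
        rw [sub_mul_sub_of_unit hi' hj', euclidNorm_sub_sq_of_unit hi' hj']
        field_simp

theorem sum_perp_apply {n : ℕ} {p : Fin n → Fin 2 → ℝ} (hsum : ∑ k, p k = 0) (b : Fin 2) :
    ∑ k, perp (p k) b = 0 := by
  have hcoord (c : Fin 2) : ∑ k, p k c = 0 := by simpa using congrFun hsum c
  fin_cases b <;> simp [perp, hcoord]

theorem sum_dvec_mul_dvec_of_unit {n : ℕ} {p : Fin n → Fin 2 → ℝ}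
    (hinj : Function.Injective p) (hnorm : ∀ i, euclidNorm (p i) = 1) (hsum : ∑ i, p i = 0)
    (i : Fin n) (a b : Fin 2) :
    ∑ k, dvec p i k a * dvec p i k b
      = n / 2 * (if a = b then 1 else 0)
        - ((if a = b then 1 else 0) + perp (p i) a * perp (p i) b - p i a * p i b) / 2 := by
  set F : Fin n → ℝ := fun k =>
    ((if a = b then 1 else 0) + perp (p i) a * perp (p k) b - p i a * p k b) / 2
  have hF : ∑ k, F k = n / 2 * (if a = b then 1 else 0) := by
    have hcoord : ∑ k, p k b = 0 := by simpa using congrFun hsum b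
    simp only [F, ← Finset.sum_div, Finset.sum_sub_distrib, Finset.sum_add_distrib,
      ← Finset.mul_sum, hcoord, sum_perp_apply hsum, Finset.sum_const, Finset.card_univ,
      Fintype.card_fin, nsmul_eq_mul]
    ring
  calc ∑ k, dvec p i k a * dvec p i k b
      = ∑ k ∈ Finset.univ.erase i, F k := by
        rw [← Finset.add_sum_erase _ _ (Finset.mem_univ i), dvec_self, Pi.zero_apply, zero_mul,
          zero_add]
        exact Finset.sum_congr rfl fun k hk => dvec_mul_dvec_of_unit
          (hinj.ne (Finset.ne_of_mem_erase hk).symm) (hnorm i) (hnorm k) a b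
    _ = _ := by rw [Finset.sum_erase_eq_sub (Finset.mem_univ i), hF]

/-- For injective `p : [n] → ℝ²` with all points on the unit circle summing to
zero: `L(K_n,p) = (n/2)I + (1/2)(ppᵀ - xxᵀ - yyᵀ - rrᵀ)`, where `p ∈ ℝ^{2n}`
is the concatenation of the `p(i)`, `x = (1,0,1,0,…)ᵀ`, `y = (0,1,0,1,…)ᵀ`,
and `r` is the concatenation of the vectors `p^⊥(i) = (-p_y(i), p_x(i))`. -/
theorem circle_stiffness_formula (n : ℕ) (p : Fin n → Fin 2 → ℝ)
    (hinj : Function.Injective p)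
    (hnorm : ∀ i, euclidNorm (p i) = 1) (hsum : ∑ i, p i = 0) :
    stiffness (⊤ : SimpleGraph (Fin n)) p =
      ((n : ℝ)/2) • (1 : Matrix (Fin n × Fin 2) (Fin n × Fin 2) ℝ) +
      (1/2 : ℝ) •
        (Matrix.vecMulVec (fun v : Fin n × Fin 2 => p v.1 v.2)
            (fun v : Fin n × Fin 2 => p v.1 v.2) -
         Matrix.vecMulVec (fun v : Fin n × Fin 2 => if v.2 = 0 then (1:ℝ) else 0)
            (fun v : Fin n × Fin 2 => if v.2 = 0 then (1:ℝ) else 0) -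
         Matrix.vecMulVec (fun v : Fin n × Fin 2 => if v.2 = 1 then (1:ℝ) else 0)
            (fun v : Fin n × Fin 2 => if v.2 = 1 then (1:ℝ) else 0) -
         Matrix.vecMulVec (fun v : Fin n × Fin 2 => if v.2 = 0 then -(p v.1 1) else p v.1 0)
            (fun v : Fin n × Fin 2 => if v.2 = 0 then -(p v.1 1) else p v.1 0)) := by
  ext ⟨i, a⟩ ⟨j, b⟩
  have hdelta : (if a = b then (1 : ℝ) else 0)
      = (if a = 0 then 1 else 0) * (if b = 0 then 1 else 0)
        + (if a = 1 then 1 else 0) * (if b = 1 then 1 else 0) := by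
    fin_cases a <;> fin_cases b <;> simp
  simp only [stiffness_top_apply, Matrix.add_apply, Matrix.smul_apply, Matrix.sub_apply,
    Matrix.vecMulVec_apply, Matrix.one_apply, Prod.mk.injEq, smul_eq_mul]
  by_cases hij : i = j
  · subst hij
    rw [sum_dvec_mul_dvec_of_unit hinj hnorm hsum, dvec_self]
    simp only [true_and, if_true, Pi.zero_apply, mul_zero, perp, hdelta]
    ring
  · rw [dvec_mul_dvec_of_unit (hinj.ne hij) (hnorm i) (hnorm j)]
    simp only [hij, false_and, if_false, perp, hdelta]
    ring
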